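/- Let H be the complex Hilbert space ℓ² over the index set {ℓ ∈ ℕ : ℓ ≥ 1}, with standard orthonormal basis (e_ℓ)_{ℓ ≥ 1}, and adopt the convention e₀ := 0. Set λ_ℓ = ℓ(ℓ+1) and a_ℓ = √( (ℓ+1)(ℓ−1) / ((2ℓ+1)(2ℓ−1)) ) for ℓ ≥ 1. Let T : H → H be a continuous linear map satisfying, for every ℓ ≥ 1, T e_ℓ = (1 − 6/λ_ℓ)·(a_ℓ·e_{ℓ−1} + a_{ℓ+1}·e_{ℓ+1}). Then the ℂ-spectrum of T is contained in the real axis: every λ in the spectrum of T satisfies Im λ = 0. -/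
import Mathlib


open Complex

/-- The standard orthonormal basis vectors of `ℓ²({ℓ ∈ ℕ : ℓ ≥ 1}; ℂ)`, with the
convention `e₀ := 0`. -/
noncomputable def e (ℓ : ℕ) : lp (fun _ : {ℓ : ℕ // 1 ≤ ℓ} => ℂ) 2 :=
  if h : 1 ≤ ℓ then lp.single 2 ⟨ℓ, h⟩ 1 else 0

/-- The eigenvalue `λ_ℓ = ℓ(ℓ+1)` of `−Δ` on the sphere. -/
noncomputable def lamCoef (ℓ : ℕ) : ℝ := (ℓ : ℝ) * ((ℓ : ℝ) + 1)

/-- The coefficient `a_ℓ = √((ℓ+1)(ℓ−1)/((2ℓ+1)(2ℓ−1)))` for `ℓ ≥ 1`. -/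
noncomputable def aCoef (ℓ : ℕ) : ℝ :=
  Real.sqrt ((((ℓ : ℝ) + 1) * ((ℓ : ℝ) - 1)) / ((2 * (ℓ : ℝ) + 1) * (2 * (ℓ : ℝ) - 1)))

namespace Prop511

local notation "⟪" x ", " y "⟫" => @inner ℂ _ _ x y

abbrev Idx : Type := {ℓ : ℕ // 1 ≤ ℓ}
abbrev H : Type := lp (fun _ : Idx => ℂ) 2

noncomputable def cc (ℓ : ℕ) : ℝ := 1 - 6 / lamCoef ℓ

lemma cc_two : cc 2 = 0 := by norm_num [cc, lamCoef]

lemma lamCoef_ge {ℓ : ℕ} (h : 3 ≤ ℓ) : 12 ≤ lamCoef ℓ := by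
  have h3 : (3 : ℝ) ≤ (ℓ : ℝ) := by exact_mod_cast h
  unfold lamCoef; nlinarith

lemma cc_half {ℓ : ℕ} (h : 3 ≤ ℓ) : 1/2 ≤ cc ℓ := by
  have h12 := lamCoef_ge h
  have hpos : (0:ℝ) < lamCoef ℓ := by linarith
  have : 6 / lamCoef ℓ ≤ 1/2 := by
    rw [div_le_iff₀ hpos]; linarith
  unfold cc; linarith

lemma cc_pos {ℓ : ℕ} (h : 3 ≤ ℓ) : 0 < cc ℓ := lt_of_lt_of_le (by norm_num) (cc_half h)

lemma cc_le_one {ℓ : ℕ} (h : 3 ≤ ℓ) : cc ℓ ≤ 1 := by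
  have h12 := lamCoef_ge h
  have : 0 ≤ 6 / lamCoef ℓ := by positivity
  unfold cc; linarith

noncomputable def dd (ℓ : ℕ) : ℝ := if ℓ ≤ 2 then 1 else Real.sqrt (cc ℓ)

lemma dd_of_ge {ℓ : ℕ} (h : 3 ≤ ℓ) : dd ℓ = Real.sqrt (cc ℓ) := if_neg (by omega)

lemma dd_zero : dd 0 = 1 := rfl
lemma dd_one : dd 1 = 1 := rfl
lemma dd_two : dd 2 = 1 := rfl

lemma half_le_dd (ℓ : ℕ) : 1/2 ≤ dd ℓ := by
  unfold dd
  split_ifs with h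
  · norm_num
  · have h3 : 3 ≤ ℓ := by omega
    have : Real.sqrt (1/4) ≤ Real.sqrt (cc ℓ) :=
      Real.sqrt_le_sqrt (le_trans (by norm_num) (cc_half h3))
    have h14 : Real.sqrt (1/4) = 1/2 := by
      rw [show (1/4 : ℝ) = (1/2)^2 by norm_num, Real.sqrt_sq (by norm_num)]
    linarith

lemma dd_pos (ℓ : ℕ) : 0 < dd ℓ := lt_of_lt_of_le (by norm_num) (half_le_dd ℓ)

lemma dd_ne_zero (ℓ : ℕ) : dd ℓ ≠ 0 := (dd_pos ℓ).ne'

lemma dd_le_one (ℓ : ℕ) : dd ℓ ≤ 1 := by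
  unfold dd
  split_ifs with h
  · norm_num
  · exact Real.sqrt_le_one.mpr (cc_le_one (by omega))

lemma dd_inv_le_two (ℓ : ℕ) : (dd ℓ)⁻¹ ≤ 2 := by
  have h := half_le_dd ℓ
  have h2 : ((2:ℝ))⁻¹ ≤ dd ℓ := by linarith
  calc (dd ℓ)⁻¹ ≤ ((2:ℝ)⁻¹)⁻¹ := by
        apply inv_anti₀ (by norm_num) h2
    _ = 2 := by norm_num

section Diag

variable (σ : Idx → ℂ) (C : ℝ)

lemma two_toReal : ((2:ENNReal)).toReal = 2 := by norm_num

lemma memDiag (hσ : ∀ i, ‖σ i‖ ≤ C) (x : H) : Memℓp (fun i => σ i * x i) 2 := by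
  apply memℓp_gen
  have hx : Summable fun i => ‖x i‖ ^ (2:ENNReal).toReal :=
    (lp.memℓp x).summable (by rw [two_toReal]; norm_num)
  refine Summable.of_nonneg_of_le (fun i => ?_) (fun i => ?_)
    (hx.mul_left ((max C 0) ^ (2:ENNReal).toReal))
  · positivity
  · rw [← Real.mul_rpow (le_max_right C 0) (norm_nonneg _)]
    apply Real.rpow_le_rpow (norm_nonneg _) ?_ (by rw [two_toReal]; norm_num)
    rw [norm_mul]
    exact mul_le_mul_of_nonneg_right (le_trans (hσ i) (le_max_left C 0)) (norm_nonneg _)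

noncomputable def diagHom (hσ : ∀ i, ‖σ i‖ ≤ C) : H →ₗ[ℂ] H where
  toFun x := ⟨fun i => σ i * x i, memDiag σ C hσ x⟩
  map_add' x y := by
    apply lp.ext
    funext i
    show σ i * (x + y) i = σ i * x i + σ i * y i
    rw [lp.coeFn_add, Pi.add_apply]; ring
  map_smul' c x := by
    apply lp.ext
    funext i
    show σ i * (c • x) i = c * (σ i * x i)
    rw [lp.coeFn_smul, Pi.smul_apply, smul_eq_mul]; ring

lemma diagHom_norm (hσ : ∀ i, ‖σ i‖ ≤ C) (x : H) : ‖diagHom σ C hσ x‖ ≤ max C 0 * ‖x‖ := by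
  apply lp.norm_le_of_forall_sum_le (by rw [two_toReal]; norm_num)
    (mul_nonneg (le_max_right C 0) (norm_nonneg x))
  intro s
  have h1 : ∀ i ∈ s, ‖(diagHom σ C hσ x) i‖ ^ (2:ENNReal).toReal
      ≤ (max C 0) ^ (2:ENNReal).toReal * ‖x i‖ ^ (2:ENNReal).toReal := by
    intro i _
    rw [← Real.mul_rpow (le_max_right C 0) (norm_nonneg _)]
    apply Real.rpow_le_rpow (norm_nonneg _) ?_ (by rw [two_toReal]; norm_num)
    show ‖σ i * x i‖ ≤ _
    rw [norm_mul]
    exact mul_le_mul_of_nonneg_right (le_trans (hσ i) (le_max_left C 0)) (norm_nonneg _)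
  calc ∑ i ∈ s, ‖(diagHom σ C hσ x) i‖ ^ (2:ENNReal).toReal
      ≤ ∑ i ∈ s, (max C 0) ^ (2:ENNReal).toReal * ‖x i‖ ^ (2:ENNReal).toReal :=
        Finset.sum_le_sum h1
    _ = (max C 0) ^ (2:ENNReal).toReal * ∑ i ∈ s, ‖x i‖ ^ (2:ENNReal).toReal := by
        rw [Finset.mul_sum]
    _ ≤ (max C 0) ^ (2:ENNReal).toReal * ‖x‖ ^ (2:ENNReal).toReal := by
        apply mul_le_mul_of_nonneg_left
          (lp.sum_rpow_le_norm_rpow (by rw [two_toReal]; norm_num) x s)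
          (Real.rpow_nonneg (le_max_right C 0) _)
    _ = (max C 0 * ‖x‖) ^ (2:ENNReal).toReal := by
        rw [Real.mul_rpow (le_max_right C 0) (norm_nonneg _)]

noncomputable def diagCLM (hσ : ∀ i, ‖σ i‖ ≤ C) : H →L[ℂ] H :=
  LinearMap.mkContinuous (diagHom σ C hσ) (max C 0) (diagHom_norm σ C hσ)

@[simp] lemma diag_apply (hσ : ∀ i, ‖σ i‖ ≤ C) (x : H) (i : Idx) : (diagCLM σ C hσ x) i = σ i * x i := rfl

end Diag

-- the concrete diagonal operators
noncomputable def Dop : H →L[ℂ] H :=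
  diagCLM (fun i => ((dd i : ℝ) : ℂ)) 1 (fun i => by
    rw [Complex.norm_real, Real.norm_eq_abs, abs_of_pos (dd_pos i)]
    exact dd_le_one i)

noncomputable def Eop : H →L[ℂ] H :=
  diagCLM (fun i => (((dd i)⁻¹ : ℝ) : ℂ)) 2 (fun i => by
    rw [Complex.norm_real, Real.norm_eq_abs, abs_of_pos (inv_pos.mpr (dd_pos i))]
    exact dd_inv_le_two i)

lemma Dop_Eop : Dop * Eop = 1 := by
  ext x i
  simp only [ContinuousLinearMap.mul_apply, ContinuousLinearMap.one_apply, Dop, Eop, diag_apply]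
  rw [← mul_assoc, ← Complex.ofReal_mul, mul_inv_cancel₀ (dd_ne_zero i)]
  simp

lemma Eop_Dop : Eop * Dop = 1 := by
  ext x i
  simp only [ContinuousLinearMap.mul_apply, ContinuousLinearMap.one_apply, Dop, Eop, diag_apply]
  rw [← mul_assoc, ← Complex.ofReal_mul, inv_mul_cancel₀ (dd_ne_zero i)]
  simp

noncomputable def uD : (H →L[ℂ] H)ˣ := ⟨Dop, Eop, Dop_Eop, Eop_Dop⟩

-- basis vector lemmas
lemma e_eq (ℓ : ℕ) (h : 1 ≤ ℓ) : e ℓ = lp.single 2 ⟨ℓ, h⟩ 1 := dif_pos h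

lemma e_zero : e 0 = 0 := dif_neg (by omega)

lemma e_apply (ℓ : ℕ) (i : Idx) : (e ℓ) i = if (i : ℕ) = ℓ then 1 else 0 := by
  by_cases h : 1 ≤ ℓ
  · rw [e_eq ℓ h]
    by_cases hi : (i : ℕ) = ℓ
    · have hii : i = ⟨ℓ, h⟩ := Subtype.ext hi
      rw [hii, lp.single_apply_self, if_pos rfl]
    · rw [lp.single_apply_ne _ _ _ (fun hc => hi (congrArg Subtype.val hc)), if_neg hi]
  · have hℓ : ℓ = 0 := by omega
    subst hℓ
    rw [e_zero, if_neg (by have := i.2; omega)]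
    simp [lp.coeFn_zero]

lemma Dop_e (ℓ : ℕ) : Dop (e ℓ) = ((dd ℓ : ℝ) : ℂ) • e ℓ := by
  apply lp.ext
  funext i
  rw [lp.coeFn_smul, Pi.smul_apply]
  simp only [Dop, diag_apply, smul_eq_mul]
  rw [e_apply]
  by_cases hi : (i : ℕ) = ℓ
  · rw [if_pos hi, hi]
  · rw [if_neg hi, mul_zero, mul_zero]

lemma Eop_e (ℓ : ℕ) : Eop (e ℓ) = ((((dd ℓ)⁻¹ : ℝ)) : ℂ) • e ℓ := by
  apply lp.ext
  funext i
  rw [lp.coeFn_smul, Pi.smul_apply]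
  simp only [Eop, diag_apply, smul_eq_mul]
  rw [e_apply]
  by_cases hi : (i : ℕ) = ℓ
  · rw [if_pos hi, hi]
  · rw [if_neg hi, mul_zero, mul_zero]

-- the rank-one operator
noncomputable def vv : H :=
  ((cc 1 * aCoef 2 : ℝ) : ℂ) • e 1 + ((Real.sqrt (cc 3) * aCoef 3 : ℝ) : ℂ) • e 3

noncomputable def Nop : H →L[ℂ] H := (innerSL ℂ vv).smulRight (e 2)

lemma Nop_apply (x : H) : Nop x = ⟪vv, x⟫ • e 2 := rfl

lemma inner_e_left (ℓ : ℕ) (h : 1 ≤ ℓ) (x : H) : ⟪e ℓ, x⟫ = x ⟨ℓ, h⟩ := by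
  rw [e_eq ℓ h, lp.inner_single_left]
  simp [RCLike.inner_apply]

lemma inner_vv (x : H) :
    ⟪vv, x⟫ = ((cc 1 * aCoef 2 : ℝ) : ℂ) * x ⟨1, by omega⟩
      + ((Real.sqrt (cc 3) * aCoef 3 : ℝ) : ℂ) * x ⟨3, by omega⟩ := by
  rw [vv, inner_add_left, inner_smul_left, inner_smul_left,
    inner_e_left 1 (by omega), inner_e_left 3 (by omega)]
  simp [Complex.conj_ofReal]

-- CHUNK3
noncomputable def bb (m : ℕ) : ℝ := Real.sqrt (cc (m - 1) * cc m) * aCoef m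

lemma bb_two : bb 2 = 0 := by
  simp [bb, cc_two]

lemma bb_three : bb 3 = 0 := by
  simp [bb, cc_two]

lemma Nop_e1 : Nop (e 1) = ((cc 1 * aCoef 2 : ℝ) : ℂ) • e 2 := by
  rw [Nop_apply, inner_vv, e_apply, e_apply, if_pos rfl, if_neg (by norm_num)]
  rw [mul_one, mul_zero, add_zero]

lemma Nop_e3 : Nop (e 3) = ((Real.sqrt (cc 3) * aCoef 3 : ℝ) : ℂ) • e 2 := by
  rw [Nop_apply, inner_vv, e_apply, e_apply, if_pos rfl, if_neg (by norm_num)]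
  rw [mul_one, mul_zero, zero_add]

lemma Nop_e_other (k : ℕ) (h1 : k ≠ 1) (h3 : k ≠ 3) : Nop (e k) = 0 := by
  rw [Nop_apply, inner_vv]
  rw [e_apply, e_apply, if_neg (fun hc => h1 hc.symm), if_neg (fun hc => h3 hc.symm)]
  simp

lemma ccast (ℓ : ℕ) : ((1 : ℂ) - 6 / (lamCoef ℓ : ℂ)) = ((cc ℓ : ℝ) : ℂ) := by
  rw [cc]; push_cast; ring

noncomputable def Sop (T : H →L[ℂ] H) : H →L[ℂ] H := Dop * T * Eop

noncomputable def Aop (T : H →L[ℂ] H) : H →L[ℂ] H := Sop T - Nop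

variable (T : H →L[ℂ] H)

lemma Sop_e (hT : ∀ ℓ : ℕ, 1 ≤ ℓ →
      T (e ℓ) = ((1 : ℂ) - 6 / (lamCoef ℓ : ℂ)) •
        ((aCoef ℓ : ℂ) • e (ℓ - 1) + (aCoef (ℓ + 1) : ℂ) • e (ℓ + 1)))
    (k : ℕ) (hk : 1 ≤ k) :
    Sop T (e k) = (((dd k)⁻¹ * cc k * (aCoef k * dd (k - 1)) : ℝ) : ℂ) • e (k - 1)
      + (((dd k)⁻¹ * cc k * (aCoef (k + 1) * dd (k + 1)) : ℝ) : ℂ) • e (k + 1) := by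
  have : Sop T (e k) = Dop (T (Eop (e k))) := rfl
  rw [this, Eop_e, map_smul, hT k hk, ccast, map_smul, map_smul, map_add, map_smul, map_smul,
    Dop_e, Dop_e]
  push_cast
  module

lemma sqrt_helper {c : ℝ} (hc : 0 < c) : (Real.sqrt c)⁻¹ * c = Real.sqrt c := by
  rw [← div_eq_inv_mul, Real.div_sqrt]

lemma key1 {k : ℕ} (hk : 3 ≤ k) :
    (dd k)⁻¹ * cc k * (aCoef (k + 1) * dd (k + 1)) = bb (k + 1) := by
  rw [dd_of_ge hk, dd_of_ge (by omega : 3 ≤ k + 1)]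
  have hbb : bb (k + 1) = Real.sqrt (cc k * cc (k + 1)) * aCoef (k + 1) := by
    simp [bb]
  rw [hbb, Real.sqrt_mul (cc_pos hk).le, sqrt_helper (cc_pos hk)]
  ring

lemma key2 {k : ℕ} (hk : 4 ≤ k) :
    (dd k)⁻¹ * cc k * (aCoef k * dd (k - 1)) = bb k := by
  rw [dd_of_ge (by omega : 3 ≤ k), dd_of_ge (by omega : 3 ≤ k - 1)]
  have hbb : bb k = Real.sqrt (cc (k - 1) * cc k) * aCoef k := rfl
  rw [hbb, Real.sqrt_mul (cc_pos (by omega : 3 ≤ k - 1)).le, sqrt_helper (cc_pos (by omega : 3 ≤ k))]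
  ring

lemma Aop_e (hT : ∀ ℓ : ℕ, 1 ≤ ℓ →
      T (e ℓ) = ((1 : ℂ) - 6 / (lamCoef ℓ : ℂ)) •
        ((aCoef ℓ : ℂ) • e (ℓ - 1) + (aCoef (ℓ + 1) : ℂ) • e (ℓ + 1)))
    (k : ℕ) (hk : 1 ≤ k) :
    Aop T (e k) = ((bb k : ℝ) : ℂ) • e (k - 1) + ((bb (k + 1) : ℝ) : ℂ) • e (k + 1) := by
  have hA : Aop T (e k) = Sop T (e k) - Nop (e k) := rfl
  obtain rfl | rfl | rfl | hk4 : k = 1 ∨ k = 2 ∨ k = 3 ∨ 4 ≤ k := by omega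
  · -- k = 1
    rw [hA, Sop_e T hT 1 (by omega), Nop_e1]
    show _ • e 0 + _ • e 2 - _ = _ • e 0 + _ • e 2
    rw [e_zero, smul_zero, smul_zero, zero_add, zero_add, bb_two, dd_one, dd_two]
    push_cast
    module
  · -- k = 2
    rw [hA, Sop_e T hT 2 (by omega), Nop_e_other 2 (by omega) (by omega)]
    rw [cc_two, bb_two, bb_three]
    push_cast
    module
  · -- k = 3
    rw [hA, Sop_e T hT 3 (by omega), Nop_e3]
    show _ • e 2 + _ • e 4 - _ = _ • e 2 + _ • e 4
    rw [bb_three, key1 (by omega : 3 ≤ 3)]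
    rw [dd_of_ge (by omega : 3 ≤ 3), dd_two]
    rw [show (Real.sqrt (cc 3))⁻¹ * cc 3 * (aCoef 3 * 1) = Real.sqrt (cc 3) * aCoef 3 by
      rw [sqrt_helper (cc_pos (by omega : 3 ≤ 3))]; ring]
    push_cast
    module
  · -- k ≥ 4
    rw [hA, Sop_e T hT k (by omega), Nop_e_other k (by omega) (by omega), sub_zero,
      key1 (by omega : 3 ≤ k), key2 hk4]

-- CHUNK4
lemma coord_eq (w : H) (j : Idx) : w j = ⟪lp.single 2 j (1 : ℂ), w⟫ := by
  rw [lp.inner_single_left]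
  simp [RCLike.inner_apply]

lemma single_eq_e (j : Idx) : lp.single 2 j (1 : ℂ) = e (j : ℕ) := by
  rw [e_eq (j : ℕ) j.2]

lemma Aop_coord (T : H →L[ℂ] H)
    (hT : ∀ ℓ : ℕ, 1 ≤ ℓ →
      T (e ℓ) = ((1 : ℂ) - 6 / (lamCoef ℓ : ℂ)) •
        ((aCoef ℓ : ℂ) • e (ℓ - 1) + (aCoef (ℓ + 1) : ℂ) • e (ℓ + 1)))
    (i j : Idx) :
    (Aop T (lp.single 2 j (1 : ℂ))) i
      = ((bb (j : ℕ) : ℝ) : ℂ) * (if (i : ℕ) = (j : ℕ) - 1 then 1 else 0)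
        + ((bb ((j : ℕ) + 1) : ℝ) : ℂ) * (if (i : ℕ) = (j : ℕ) + 1 then 1 else 0) := by
  rw [single_eq_e, Aop_e T hT (j : ℕ) j.2]
  rw [lp.coeFn_add, Pi.add_apply, lp.coeFn_smul, Pi.smul_apply, lp.coeFn_smul, Pi.smul_apply,
    e_apply, e_apply, smul_eq_mul, smul_eq_mul]

lemma isSelfAdjoint_Aop (T : H →L[ℂ] H)
    (hT : ∀ ℓ : ℕ, 1 ≤ ℓ →
      T (e ℓ) = ((1 : ℂ) - 6 / (lamCoef ℓ : ℂ)) •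
        ((aCoef ℓ : ℂ) • e (ℓ - 1) + (aCoef (ℓ + 1) : ℂ) • e (ℓ + 1))) :
    IsSelfAdjoint (Aop T) := by
  rw [ContinuousLinearMap.isSelfAdjoint_iff']
  -- dense span of the singles
  let b : HilbertBasis Idx ℂ H := default
  have hb : ∀ i : Idx, b i = lp.single 2 i (1 : ℂ) := by
    intro i
    rw [← b.repr_symm_single]
    rfl
  have hdense : Dense ((Submodule.span ℂ (Set.range fun i : Idx => lp.single 2 i (1:ℂ)) : Submodule ℂ H) : Set H) := by
    have h1 : (Set.range fun i : Idx => lp.single 2 i (1:ℂ)) = Set.range b := by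
      rw [funext hb]
    rw [h1]
    exact Submodule.dense_iff_topologicalClosure_eq_top.mpr b.dense_span
  apply ContinuousLinearMap.ext_on hdense
  rintro _ ⟨i, rfl⟩
  apply lp.ext
  funext j
  have lhs : ((ContinuousLinearMap.adjoint (Aop T)) (lp.single 2 i (1:ℂ))) j
      = (starRingEnd ℂ) ((Aop T (lp.single 2 j (1:ℂ))) i) := by
    rw [coord_eq, ContinuousLinearMap.adjoint_inner_right]
    rw [single_eq_e i, e_eq (i : ℕ) i.2, lp.inner_single_right]
    simp [RCLike.inner_apply]
  rw [lhs, Aop_coord T hT i j, Aop_coord T hT j i]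
  obtain ⟨m, hm⟩ := i
  obtain ⟨n, hn⟩ := j
  simp only [map_add, map_mul, Complex.conj_ofReal, apply_ite (starRingEnd ℂ), map_one, map_zero]
  by_cases h1 : n = m + 1
  · subst h1
    rw [if_pos (by omega), if_neg (by omega), if_neg (by omega), if_pos (by omega)]
    norm_num
  · by_cases h2 : m = n + 1
    · subst h2
      rw [if_neg (by omega), if_pos (by omega), if_pos (by omega), if_neg (by omega)]
      norm_num
    · rw [if_neg (by omega), if_neg (by omega), if_neg (by omega), if_neg (by omega)]
      norm_num

-- CHUNK5
lemma inner_vv_e2 : ⟪vv, e 2⟫ = 0 := by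
  rw [inner_vv, e_apply, e_apply, if_neg (by norm_num), if_neg (by norm_num)]
  simp

lemma Aop_e2 (T : H →L[ℂ] H)
    (hT : ∀ ℓ : ℕ, 1 ≤ ℓ →
      T (e ℓ) = ((1 : ℂ) - 6 / (lamCoef ℓ : ℂ)) •
        ((aCoef ℓ : ℂ) • e (ℓ - 1) + (aCoef (ℓ + 1) : ℂ) • e (ℓ + 1))) :
    Aop T (e 2) = 0 := by
  rw [Aop_e T hT 2 (by omega), bb_two, bb_three]
  simp

lemma AopNop (T : H →L[ℂ] H)
    (hT : ∀ ℓ : ℕ, 1 ≤ ℓ →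
      T (e ℓ) = ((1 : ℂ) - 6 / (lamCoef ℓ : ℂ)) •
        ((aCoef ℓ : ℂ) • e (ℓ - 1) + (aCoef (ℓ + 1) : ℂ) • e (ℓ + 1))) :
    Aop T * Nop = 0 := by
  apply ContinuousLinearMap.ext
  intro x
  rw [ContinuousLinearMap.mul_apply, ContinuousLinearMap.zero_apply,
    Nop_apply, map_smul, Aop_e2 T hT, smul_zero]

lemma NopNop : Nop * Nop = 0 := by
  apply ContinuousLinearMap.ext
  intro x
  rw [ContinuousLinearMap.mul_apply, ContinuousLinearMap.zero_apply,
    Nop_apply x, map_smul, Nop_apply (e 2), inner_vv_e2, zero_smul, smul_zero]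

lemma isUnit_shift (lam : ℂ) (hlam : lam ≠ 0) (A N R : H →L[ℂ] H)
    (h1 : (algebraMap ℂ (H →L[ℂ] H) lam - A) * R = 1)
    (h2 : R * (algebraMap ℂ (H →L[ℂ] H) lam - A) = 1)
    (hAN : A * N = 0) (hNN : N * N = 0) :
    IsUnit (algebraMap ℂ (H →L[ℂ] H) lam - (A + N)) := by
  set z := algebraMap ℂ (H →L[ℂ] H) lam with hz
  have hzN : (z - A) * N = lam • N := by
    rw [sub_mul, hAN, sub_zero, hz, Algebra.smul_def]
  have hRN : R * N = lam⁻¹ • N := by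
    have h3 : R * ((z - A) * N) = N := by rw [← mul_assoc, h2, one_mul]
    rw [hzN, mul_smul_comm] at h3
    calc R * N = lam⁻¹ • (lam • (R * N)) := by rw [smul_smul, inv_mul_cancel₀ hlam, one_smul]
      _ = lam⁻¹ • N := by rw [h3]
  have hxx : (R * N) * (R * N) = 0 := by
    rw [hRN, smul_mul_assoc, mul_smul_comm, hNN]
    simp
  have hu1 : IsUnit ((1 : H →L[ℂ] H) - R * N) := by
    refine ⟨⟨1 - R * N, 1 + R * N, ?_, ?_⟩, rfl⟩
    · have h4 : ((1 : H →L[ℂ] H) - R * N) * (1 + R * N) = 1 - (R * N) * (R * N) := by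
        noncomm_ring
      rw [h4, hxx, sub_zero]
    · have h4 : ((1 : H →L[ℂ] H) + R * N) * (1 - R * N) = 1 - (R * N) * (R * N) := by
        noncomm_ring
      rw [h4, hxx, sub_zero]
  have hu0 : IsUnit (z - A) := ⟨⟨z - A, R, h1, h2⟩, rfl⟩
  have factor : z - (A + N) = (z - A) * (1 - R * N) := by
    have h5 : (z - A) * (1 - R * N) = (z - A) - ((z - A) * R) * N := by noncomm_ring
    rw [h5, h1, one_mul]
    noncomm_ring
  rw [factor]
  exact hu0.mul hu1

end Prop511

open Prop511 in
/-- **Proposition 5.1.1.** At `Ω = 0`, the matrix operator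
`T e_ℓ = (1 − 6/λ_ℓ)(a_ℓ e_{ℓ−1} + a_{ℓ+1} e_{ℓ+1})` (the representation of
`M₁ζ = x₃ζ + 6x₃Δ⁻¹ζ` on `V₁` for the zonal flow with stream function `cP₂(x₃)`)
has only real spectrum. -/
theorem spectrum_real_P2_V1_Omega_zero
    (T : lp (fun _ : {ℓ : ℕ // 1 ≤ ℓ} => ℂ) 2 →L[ℂ] lp (fun _ : {ℓ : ℕ // 1 ≤ ℓ} => ℂ) 2)
    (hT : ∀ ℓ : ℕ, 1 ≤ ℓ →
      T (e ℓ) = ((1 : ℂ) - 6 / (lamCoef ℓ : ℂ)) •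
        ((aCoef ℓ : ℂ) • e (ℓ - 1) + (aCoef (ℓ + 1) : ℂ) • e (ℓ + 1))) :
    ∀ lam ∈ spectrum ℂ T, lam.im = 0 := by
  intro lam hmem
  by_contra him
  have hlam0 : lam ≠ 0 := by
    intro h
    rw [h] at him
    simp at him
  have hmem2 : lam ∈ spectrum ℂ ((uD : H →L[ℂ] H) * T * ((uD⁻¹ : (H →L[ℂ] H)ˣ) : H →L[ℂ] H)) := by
    rw [spectrum.units_conjugate]
    exact hmem
  have hconj : (uD : H →L[ℂ] H) * T * ((uD⁻¹ : (H →L[ℂ] H)ˣ) : H →L[ℂ] H) = Aop T + Nop := by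
    have h0 : ((uD⁻¹ : (H →L[ℂ] H)ˣ) : H →L[ℂ] H) = Eop := rfl
    have h1 : (uD : H →L[ℂ] H) = Dop := rfl
    rw [h0, h1]
    show Dop * T * Eop = Aop T + Nop
    rw [Aop, sub_add_cancel, Sop]
  rw [hconj] at hmem2
  have hsa := isSelfAdjoint_Aop T hT
  have hnot : lam ∉ spectrum ℂ (Aop T) := fun hmem3 =>
    him (hsa.im_eq_zero_of_mem_spectrum hmem3)
  rw [spectrum.notMem_iff] at hnot
  have h1 : (algebraMap ℂ (H →L[ℂ] H) lam - Aop T) * ↑hnot.unit⁻¹ = 1 :=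
    hnot.mul_val_inv
  have h2 : (↑hnot.unit⁻¹ : H →L[ℂ] H) * (algebraMap ℂ (H →L[ℂ] H) lam - Aop T) = 1 :=
    hnot.val_inv_mul
  have hunit := isUnit_shift lam hlam0 (Aop T) Nop (↑hnot.unit⁻¹) h1 h2 (AopNop T hT) NopNop
  exact (spectrum.mem_iff.mp hmem2) hunit
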